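/- arXiv:1807.03815 — 7 statements merged into one kernel-verified Lean document; each statement's English description precedes it below -/
import Mathlib

section
/- Let H be a locally compact abelian group and W ⊆ H a compact set. Then there exists a function h in the span of convolutions of compactly supported continuous functions on H such that h ≡ 1 on W. -/
open MeasureTheory Pointwise Set

/-! Take a nonnegative bump `f` with positive integral and, by Urysohn, a compactly supported
`g` equal to `1` on the compact set `W - tsupport f`. For `s ∈ W`, the integrand of
`(f * g)(s) = ∫ f t g(s - t) dt` vanishes unless `t ∈ tsupport f`, where `g (s - t) = 1`;
hence `f * g ≡ ∫ f` on `W`, and `(∫ f)⁻¹ • f * g` is the required function. -/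

theorem integral_mul_comp_sub_eq_integral_of_eqOn_one {G E : Type*} [TopologicalSpace G] [Sub G]
    [MeasurableSpace G] [NormedRing E] [NormedSpace ℝ E] (μ : Measure G) {f g : G → E}
    {W : Set G} (hg : EqOn g 1 (W - tsupport f)) {s : G} (hs : s ∈ W) :
    ∫ t, f t * g (s - t) ∂μ = ∫ t, f t ∂μ := by
  congr 1 with t
  by_cases ht : f t = 0
  · simp [ht]
  · rw [hg (sub_mem_sub hs (subset_tsupport f ht)), Pi.one_apply, mul_one]

theorem stmt_1_general {H : Type*} [TopologicalSpace H] [AddCommGroup H] [IsTopologicalAddGroup H]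
    [LocallyCompactSpace H] [MeasurableSpace H] [BorelSpace H]
    (haar : Measure H) [haar.IsAddHaarMeasure]
    (W : Set H) (hW : IsCompact W) :
    ∃ (n : ℕ) (c : Fin n → ℂ) (f g : Fin n → H → ℂ),
      (∀ i, Continuous (f i) ∧ HasCompactSupport (f i) ∧
        Continuous (g i) ∧ HasCompactSupport (g i)) ∧
      ∀ s ∈ W, (∑ i, c i * ∫ t, f i t * g i (s - t) ∂haar) = 1 := by
  obtain ⟨f, hf_supp, hf_nonneg, hf0⟩ := exists_continuous_nonneg_pos (0 : H)
  have hf_int : 0 < ∫ t, f t ∂haar :=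
    f.continuous.integral_pos_of_hasCompactSupport_nonneg_nonzero hf_supp hf_nonneg hf0
  set F : H → ℂ := fun t => f t
  have hF_supp : HasCompactSupport F := hf_supp.comp_left Complex.ofReal_zero
  have hWF : IsCompact (W - tsupport F) := by
    simpa only [sub_eq_add_neg] using hW.add hF_supp.isCompact.neg
  obtain ⟨g, hg_one, -, hg_supp, -⟩ :=
    exists_continuous_one_zero_of_isCompact hWF isClosed_empty (disjoint_empty _)
  refine ⟨1, fun _ => ((∫ t, f t ∂haar : ℝ) : ℂ)⁻¹, fun _ => F, fun _ t => g t,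
    fun _ => ⟨by fun_prop, hF_supp, by fun_prop, hg_supp.comp_left Complex.ofReal_zero⟩,
    fun s hs => ?_⟩
  have hG : EqOn (fun t => (g t : ℂ)) 1 (W - tsupport F) := fun x hx => by simp [hg_one hx]
  have hF_int : ∫ t, F t ∂haar = ((∫ t, f t ∂haar : ℝ) : ℂ) := integral_ofReal
  rw [Fin.sum_univ_one, integral_mul_comp_sub_eq_integral_of_eqOn_one haar hG hs, hF_int]
  exact inv_mul_cancel₀ (Complex.ofReal_ne_zero.2 hf_int.ne')

/-- On a locally compact abelian group `H` with Haar measure, for every compact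
set `W` there is a function in `K₂(H)`, i.e. a finite linear combination of convolutions
`fᵢ * gᵢ` of compactly supported continuous functions, which is identically `1` on `W`. -/
theorem stmt_1 {H : Type*} [TopologicalSpace H] [AddCommGroup H] [IsTopologicalAddGroup H]
    [LocallyCompactSpace H] [T2Space H] [MeasurableSpace H] [BorelSpace H]
    (haar : Measure H) [haar.IsAddHaarMeasure]
    (W : Set H) (hW : IsCompact W) :
    ∃ (n : ℕ) (c : Fin n → ℂ) (f g : Fin n → H → ℂ),
      (∀ i, Continuous (f i) ∧ HasCompactSupport (f i) ∧
        Continuous (g i) ∧ HasCompactSupport (g i)) ∧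
      ∀ s ∈ W, (∑ i, c i * ∫ t, f i t * g i (s - t) ∂haar) = 1 :=
  stmt_1_general haar W hW
end

section
/- Let G be a locally compact abelian group, K and K' compact subsets of G with K contained in the interior of K'. If ν is a finite (complex Radon) measure on G and μ is a translation bounded measure on G, then |μ * ν|(K) ≤ ‖μ‖_{K'} · |ν|(G), where ‖μ‖_{K'} = sup_{t ∈ G} |μ|(t + K'). -/
open MeasureTheory

/-!
Since `K ⊆ interior K'` and the interior is open, it suffices to bound `(μ ∗ ν) (interior K')`.
By Tonelli (integrating in `μ` first, which needs `μ` to be σ-finite: a translation bounded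
measure is finite on compacts, and `G` is σ-compact) this equals `∫ μ (interior K' - y) dν(y)`,
and each slice `interior K' - y` lies in the translate `-y + K'`, whose measure is at most
`‖μ‖_{K'}`.
-/

lemma isFiniteMeasureOnCompacts_of_iSup_image_add_lt_top {G : Type*} [AddZeroClass G]
    [TopologicalSpace G] [MeasurableSpace G] {μ : Measure G}
    (hμ : ∀ C : Set G, IsCompact C → ⨆ t : G, μ ((t + ·) '' C) < ⊤) :
    IsFiniteMeasureOnCompacts μ where
  lt_top_of_isCompact C hC :=
    calc μ C = μ ((0 + ·) '' C) := by simp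
      _ ≤ ⨆ t : G, μ ((t + ·) '' C) := le_iSup (fun t : G => μ ((t + ·) '' C)) 0
      _ < ⊤ := hμ C hC

section AddCommGroup

variable {G : Type*} [AddCommGroup G] [MeasurableSpace G]

lemma measure_preimage_add_right_le_iSup_image_add (μ : Measure G) {s K : Set G} (hsK : s ⊆ K)
    (y : G) : μ ((· + y) ⁻¹' s) ≤ ⨆ t : G, μ ((t + ·) '' K) :=
  le_iSup_of_le (-y) <| measure_mono fun x hx => ⟨x + y, hsK hx, neg_add_cancel_comm_assoc y x⟩

lemma conv_apply_le_iSup_image_add_mul [MeasurableAdd₂ G] (μ ν : Measure G) [SFinite μ]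
    [SFinite ν] {s K : Set G} (hs : MeasurableSet s) (hsK : s ⊆ K) :
    (μ ∗ ν) s ≤ (⨆ t : G, μ ((t + ·) '' K)) * ν Set.univ := by
  rw [Measure.conv, Measure.map_apply measurable_add hs,
    Measure.prod_apply_symm (measurable_add hs)]
  exact (lintegral_mono fun y => measure_preimage_add_right_le_iSup_image_add μ hsK y).trans_eq
    (lintegral_const _)

end AddCommGroup

theorem stmt_2_general {G : Type*} [TopologicalSpace G] [AddCommGroup G] [IsTopologicalAddGroup G]
    [LocallyCompactSpace G] [SecondCountableTopology G]
    [MeasurableSpace G] [BorelSpace G]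
    (K K' : Set G) (hKK' : K ⊆ interior K')
    (μ ν : Measure G) [IsFiniteMeasure ν]
    (hμtb : ∀ C : Set G, IsCompact C → (⨆ t : G, μ ((t + ·) '' C)) < ⊤) :
    ((μ.prod ν).map (fun p : G × G => p.1 + p.2)) K ≤
      (⨆ t : G, μ ((t + ·) '' K')) * ν Set.univ := by
  have := isFiniteMeasureOnCompacts_of_iSup_image_add_lt_top hμtb
  calc (μ ∗ ν) K ≤ (μ ∗ ν) (interior K') := measure_mono hKK'
    _ ≤ _ := conv_apply_le_iSup_image_add_mul μ ν isOpen_interior.measurableSet interior_subset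

/-- If `K ⊆ interior K'` are compact sets, `ν` a finite measure and `μ` a
translation bounded measure on a locally compact abelian group `G`, then
`|μ * ν|(K) ≤ ‖μ‖_{K'} · |ν|(G)`, where `‖μ‖_{K'} = sup_t |μ|(t + K')` and the
convolution is `(μ * ν)(A) = ∫∫ 1_A(s + t) dν(s) dμ(t)`, i.e. the pushforward of
`μ.prod ν` under addition. -/
theorem stmt_2 {G : Type*} [TopologicalSpace G] [AddCommGroup G] [IsTopologicalAddGroup G]
    [LocallyCompactSpace G] [T2Space G] [SecondCountableTopology G]
    [MeasurableSpace G] [BorelSpace G]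
    (K K' : Set G) (hK : IsCompact K) (hK' : IsCompact K') (hKK' : K ⊆ interior K')
    (μ ν : Measure G) [IsFiniteMeasure ν]
    (hμtb : ∀ C : Set G, IsCompact C → (⨆ t : G, μ ((t + ·) '' C)) < ⊤) :
    ((μ.prod ν).map (fun p : G × G => p.1 + p.2)) K ≤
      (⨆ t : G, μ ((t + ·) '' K')) * ν Set.univ :=
  stmt_2_general K K' hKK' μ ν hμtb
end

section
/- Let G be a locally compact abelian group. If ν is a finite measure on G and μ is a norm almost periodic translation bounded measure on G, then the convolution μ * ν is norm almost periodic. -/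
/-!
Translation commutes with convolution, `T_t (μ ∗ ν) = (T_t μ) ∗ ν`, and
`(μ ∗ ν)(A) = ∫ μ(A - y) dν(y)`. If `A` lies in a translate of `K`, so does every `A - y`,
hence `‖T_t μ ∗ ν - μ ∗ ν‖_K ≤ ‖T_t μ - μ‖_K · ν(G)`: every `ε / (ν(G) + 1)`-almost period
of `μ` is an `ε`-almost period of `μ ∗ ν`. Translation boundedness of `μ` keeps all the
quantities involved finite, so the real-valued differences behave.
-/

open MeasureTheory

/-- The `K`-norm distance between two (positive) translation bounded measures:
`sup_{s ∈ G} sup { |μ(A) - ν(A)| : A measurable, A ⊆ s + K }`, a variant of the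
total variation norm `‖μ - ν‖_K`. -/
noncomputable def normDist {G : Type*} [AddCommGroup G] [MeasurableSpace G]
    (μ ν : Measure G) (K : Set G) : ℝ :=
  ⨆ s : G, ⨆ A : {A : Set G // MeasurableSet A ∧ A ⊆ (s + ·) '' K},
    |(μ A.1).toReal - (ν A.1).toReal|

open scoped ENNReal

section Lintegral

variable {α : Type*} [MeasurableSpace α] {ν : Measure α} [IsFiniteMeasure ν] {f g : α → ℝ≥0∞}

lemma toReal_lintegral_le_add_mul {c : ℝ} (hc : 0 ≤ c) (hf : ∀ x, f x ≠ ∞)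
    (hg : ∫⁻ x, g x ∂ν ≠ ∞) (hfg : ∀ x, (f x).toReal ≤ (g x).toReal + c) :
    (∫⁻ x, f x ∂ν).toReal ≤ (∫⁻ x, g x ∂ν).toReal + c * (ν Set.univ).toReal := by
  have hpointwise : ∀ x, f x ≤ g x + ENNReal.ofReal c := fun x =>
    calc f x ≤ ENNReal.ofReal ((g x).toReal + c) :=
          (ENNReal.le_ofReal_iff_toReal_le (hf x) (by positivity)).2 (hfg x)
      _ = ENNReal.ofReal (g x).toReal + ENNReal.ofReal c := ENNReal.ofReal_add (by positivity) hc
      _ ≤ g x + ENNReal.ofReal c := by gcongr; exact ENNReal.ofReal_toReal_le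
  have hint : ∫⁻ x, f x ∂ν ≤ ∫⁻ x, g x ∂ν + ENNReal.ofReal c * ν Set.univ :=
    calc ∫⁻ x, f x ∂ν ≤ ∫⁻ x, g x + ENNReal.ofReal c ∂ν := lintegral_mono hpointwise
      _ = ∫⁻ x, g x ∂ν + ENNReal.ofReal c * ν Set.univ := by
        rw [lintegral_add_right _ measurable_const, lintegral_const]
  have hfin : ENNReal.ofReal c * ν Set.univ ≠ ∞ := by finiteness
  calc (∫⁻ x, f x ∂ν).toReal
      ≤ (∫⁻ x, g x ∂ν + ENNReal.ofReal c * ν Set.univ).toReal :=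
        ENNReal.toReal_mono (ENNReal.add_ne_top.2 ⟨hg, hfin⟩) hint
    _ = (∫⁻ x, g x ∂ν).toReal + c * (ν Set.univ).toReal := by
        rw [ENNReal.toReal_add hg hfin, ENNReal.toReal_mul, ENNReal.toReal_ofReal hc]

lemma abs_toReal_lintegral_sub_le {M : ℝ≥0∞} (hM : M ≠ ∞) (hfM : ∀ x, f x ≤ M)
    (hgM : ∀ x, g x ≤ M) {c : ℝ} (hc : 0 ≤ c) (hfg : ∀ x, |(f x).toReal - (g x).toReal| ≤ c) :
    |(∫⁻ x, f x ∂ν).toReal - (∫⁻ x, g x ∂ν).toReal| ≤ c * (ν Set.univ).toReal := by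
  have lintegral_ne_top {h : α → ℝ≥0∞} (hhM : ∀ x, h x ≤ M) : ∫⁻ x, h x ∂ν ≠ ∞ :=
    ne_top_of_le_ne_top (by finiteness) ((lintegral_mono hhM).trans_eq (lintegral_const M))
  rw [abs_sub_le_iff]
  constructor
  · have := toReal_lintegral_le_add_mul (ν := ν) hc (fun x => ne_top_of_le_ne_top hM (hfM x))
      (lintegral_ne_top hgM) (fun x => by linarith [(abs_sub_le_iff.1 (hfg x)).1])
    linarith
  · have := toReal_lintegral_le_add_mul (ν := ν) hc (fun x => ne_top_of_le_ne_top hM (hgM x))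
      (lintegral_ne_top hfM) (fun x => by linarith [(abs_sub_le_iff.1 (hfg x)).2])
    linarith

end Lintegral

lemma preimage_add_const_image_const_add {G : Type*} [AddCommGroup G] (K : Set G) (s y : G) :
    (· + y) ⁻¹' ((s + ·) '' K) = (s - y + ·) '' K := by
  simp only [Set.image_add_left, Set.preimage_preimage]
  congr! 2 with x
  abel

lemma preimage_const_add_image_const_add {G : Type*} [AddCommGroup G] (K : Set G) (t s : G) :
    (t + ·) ⁻¹' ((s + ·) '' K) = (s - t + ·) '' K := by
  simp only [Set.image_add_left, Set.preimage_preimage]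
  congr! 2 with x
  abel

section NormDist

variable {G : Type*} [AddCommGroup G] [MeasurableSpace G] {μ₁ μ₂ : Measure G} {K : Set G}

lemma normDist_nonneg : 0 ≤ normDist μ₁ μ₂ K :=
  Real.iSup_nonneg fun _ => Real.iSup_nonneg fun _ => abs_nonneg _

lemma normDist_le {D : ℝ} (hD : 0 ≤ D)
    (h : ∀ (s : G) (A : Set G), MeasurableSet A → A ⊆ (s + ·) '' K →
      |(μ₁ A).toReal - (μ₂ A).toReal| ≤ D) :
    normDist μ₁ μ₂ K ≤ D :=
  Real.iSup_le (fun s => Real.iSup_le (fun A => h s A.1 A.2.1 A.2.2) hD) hD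

lemma abs_sub_le_normDist {M : ℝ≥0∞} (hM : M ≠ ∞) (h₁ : ∀ u, μ₁ ((u + ·) '' K) ≤ M)
    (h₂ : ∀ u, μ₂ ((u + ·) '' K) ≤ M) {s : G} {A : Set G} (hA : MeasurableSet A)
    (hAs : A ⊆ (s + ·) '' K) :
    |(μ₁ A).toReal - (μ₂ A).toReal| ≤ normDist μ₁ μ₂ K := by
  have hbound : ∀ (u : G) (B : Set G), B ⊆ (u + ·) '' K →
      |(μ₁ B).toReal - (μ₂ B).toReal| ≤ M.toReal := fun u B hB => by
    simpa using abs_sub_le_of_le_of_le ENNReal.toReal_nonneg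
      (ENNReal.toReal_mono hM ((measure_mono hB).trans (h₁ u))) ENNReal.toReal_nonneg
      (ENNReal.toReal_mono hM ((measure_mono hB).trans (h₂ u)))
  have hbdd : ∀ u : G, BddAbove (Set.range fun B : {B : Set G // MeasurableSet B ∧
      B ⊆ (u + ·) '' K} => |(μ₁ B.1).toReal - (μ₂ B.1).toReal|) := fun u =>
    ⟨M.toReal, Set.forall_mem_range.2 fun B => hbound u B.1 B.2.2⟩
  refine (le_ciSup (hbdd s) ⟨A, hA, hAs⟩).trans (le_ciSup (f := fun u : G =>
    ⨆ B : {B : Set G // MeasurableSet B ∧ B ⊆ (u + ·) '' K},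
      |(μ₁ B.1).toReal - (μ₂ B.1).toReal|) ⟨M.toReal, ?_⟩ s)
  exact Set.forall_mem_range.2 fun u =>
    Real.iSup_le (fun B => hbound u B.1 B.2.2) ENNReal.toReal_nonneg

end NormDist

namespace MeasureTheory.Measure

variable {G : Type*} [AddCommGroup G] [MeasurableSpace G] [MeasurableAdd₂ G]

lemma map_const_add_conv (t : G) (μ ν : Measure G) [SFinite μ] [SFinite ν] :
    (μ ∗ ν).map (t + ·) = μ.map (t + ·) ∗ ν := by
  rw [← dirac_conv, ← dirac_conv, conv_assoc]

lemma conv_apply (μ ν : Measure G) [SFinite μ] [SFinite ν] {A : Set G}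
    (hA : MeasurableSet A) : (μ ∗ ν) A = ∫⁻ y, μ ((· + y) ⁻¹' A) ∂ν := by
  rw [conv, map_apply measurable_add hA, prod_apply_symm (measurable_add hA)]
  rfl

end MeasureTheory.Measure

lemma normDist_conv_le {G : Type*} [AddCommGroup G] [MeasurableSpace G] [MeasurableAdd₂ G]
    {μ₁ μ₂ : Measure G} [SFinite μ₁] [SFinite μ₂] (ν : Measure G)
    [IsFiniteMeasure ν] {K : Set G} {M : ℝ≥0∞} (hM : M ≠ ∞)
    (h₁ : ∀ u, μ₁ ((u + ·) '' K) ≤ M) (h₂ : ∀ u, μ₂ ((u + ·) '' K) ≤ M) :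
    normDist (μ₁ ∗ ν) (μ₂ ∗ ν) K ≤ normDist μ₁ μ₂ K * (ν Set.univ).toReal := by
  refine normDist_le (mul_nonneg normDist_nonneg ENNReal.toReal_nonneg) fun s A hA hAs => ?_
  have hslice : ∀ y, (· + y) ⁻¹' A ⊆ (s - y + ·) '' K := fun y => by
    rw [← preimage_add_const_image_const_add K s y]
    exact Set.preimage_mono hAs
  rw [Measure.conv_apply μ₁ ν hA, Measure.conv_apply μ₂ ν hA]
  exact abs_toReal_lintegral_sub_le hM
    (fun y => (measure_mono (hslice y)).trans (h₁ _))
    (fun y => (measure_mono (hslice y)).trans (h₂ _)) normDist_nonneg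
    (fun y => abs_sub_le_normDist hM h₁ h₂ (measurable_add_const y hA) (hslice y))

theorem stmt_3_general {G : Type*} [TopologicalSpace G] [AddCommGroup G] [IsTopologicalAddGroup G]
    [LocallyCompactSpace G] [SecondCountableTopology G]
    [MeasurableSpace G] [BorelSpace G]
    (K : Set G) (hK : IsCompact K)
    (μ ν : Measure G) [IsFiniteMeasure ν]
    (hμtb : ∀ C : Set G, IsCompact C → (⨆ t : G, μ ((t + ·) '' C)) < ⊤)
    (hμap : ∀ ε > (0 : ℝ), ∃ C : Set G, IsCompact C ∧
      ∀ g : G, ∃ t : G, normDist (μ.map (t + ·)) μ K < ε ∧ g ∈ (t + ·) '' C) :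
    ∀ ε > (0 : ℝ), ∃ C : Set G, IsCompact C ∧
      ∀ g : G, ∃ t : G,
        normDist ((((μ.prod ν).map (fun p : G × G => p.1 + p.2)).map (t + ·)))
          ((μ.prod ν).map (fun p : G × G => p.1 + p.2)) K < ε ∧
        g ∈ (t + ·) '' C := by
  have : IsFiniteMeasureOnCompacts μ := ⟨fun C hC => by
    simpa using (le_iSup (fun u => μ ((u + ·) '' C)) 0).trans_lt (hμtb C hC)⟩
  intro ε hε
  obtain ⟨C, hC, hrel⟩ := hμap (ε / ((ν Set.univ).toReal + 1)) (by positivity)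
  refine ⟨C, hC, fun g => ?_⟩
  obtain ⟨t, ht, hg⟩ := hrel g
  refine ⟨t, ?_, hg⟩
  set M := ⨆ u, μ ((u + ·) '' K)
  have hμM : ∀ u, μ ((u + ·) '' K) ≤ M := le_iSup (fun u => μ ((u + ·) '' K))
  have htranslate : ∀ u, μ.map (t + ·) ((u + ·) '' K) ≤ M := fun u => by
    rw [(measurableEmbedding_addLeft t).map_apply, preimage_const_add_image_const_add]
    exact hμM _
  change normDist ((μ ∗ ν).map (t + ·)) (μ ∗ ν) K < ε
  rw [Measure.map_const_add_conv]
  calc normDist (μ.map (t + ·) ∗ ν) (μ ∗ ν) K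
      ≤ normDist (μ.map (t + ·)) μ K * (ν Set.univ).toReal :=
        normDist_conv_le ν (hμtb K hK).ne htranslate hμM
    _ ≤ normDist (μ.map (t + ·)) μ K * ((ν Set.univ).toReal + 1) := by
        gcongr
        · exact normDist_nonneg
        · linarith
    _ < ε := (lt_div_iff₀ (by positivity)).1 ht

/-- On a locally compact abelian group, the convolution of a norm almost
periodic translation bounded measure `μ` with a finite measure `ν` is norm almost
periodic.  Here `T_t μ = μ.map (t + ·)` and norm almost periodicity w.r.t. a fixed
compact `K` with nonempty interior means: for every `ε > 0` the set of `t` with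
`‖T_t μ - μ‖_K < ε` is relatively dense. -/
theorem stmt_3 {G : Type*} [TopologicalSpace G] [AddCommGroup G] [IsTopologicalAddGroup G]
    [LocallyCompactSpace G] [T2Space G] [SecondCountableTopology G]
    [MeasurableSpace G] [BorelSpace G]
    (K : Set G) (hK : IsCompact K) (hKint : (interior K).Nonempty)
    (μ ν : Measure G) [IsFiniteMeasure ν]
    (hμtb : ∀ C : Set G, IsCompact C → (⨆ t : G, μ ((t + ·) '' C)) < ⊤)
    (hμap : ∀ ε > (0 : ℝ), ∃ C : Set G, IsCompact C ∧
      ∀ g : G, ∃ t : G, normDist (μ.map (t + ·)) μ K < ε ∧ g ∈ (t + ·) '' C) :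
    ∀ ε > (0 : ℝ), ∃ C : Set G, IsCompact C ∧
      ∀ g : G, ∃ t : G,
        normDist ((((μ.prod ν).map (fun p : G × G => p.1 + p.2)).map (t + ·)))
          ((μ.prod ν).map (fun p : G × G => p.1 + p.2)) K < ε ∧
        g ∈ (t + ·) '' C :=
  stmt_3_general K hK μ ν hμtb hμap
end

section
/- Let G be a locally compact abelian group, let ω be a pure point measure whose support Γ is U-uniformly discrete for some open neighborhood U of 0 and satisfies ω({x}) = 1 for all x in a set Λ ⊆ Γ. Let γ be a measure with supp(γ) ⊆ Λ, and let f ∈ C_c(G) with supp(f * f̃) ⊆ U. Then the product measure (γ * f * f̃)·ω equals γ. -/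
open MeasureTheory

/-- Convolution of complex valued functions w.r.t. a (Haar) measure. -/
noncomputable def convC {G : Type*} [AddCommGroup G] [MeasurableSpace G]
    (haar : Measure G) (f g : G → ℂ) : G → ℂ :=
  fun x => ∫ t, f t * g (x - t) ∂haar

/-- The reflection-conjugate `f̃(x) = conj (f (-x))`. -/
noncomputable def tildeC {G : Type*} [AddCommGroup G] (f : G → ℂ) : G → ℂ :=
  fun x => starRingEnd ℂ (f (-x))

/-!
On atoms, `(γ * F) · ω` only sees the term `y = x` of `Σ_y γ({y}) F(x - y)`: a nonzero term
forces `x - y ∈ supp F ⊆ U` with `y ∈ Λ ⊆ Γ`, so `x ∈ (y + U) ∩ Γ = {y}` by uniform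
discreteness. Hence the product at `x ∈ Γ` is `F(0) γ({x}) ω({x})`, which is `F(0) γ({x})`
because `ω = 1` on `Λ` and `γ = 0` off `Λ`; off `Γ` both sides vanish.
-/

section UniformlyDiscrete

variable {G : Type*} [AddCommGroup G] {U Γ : Set G}

theorem eq_of_sub_mem_of_uniformlyDiscrete (hud : ∀ y ∈ Γ, ((y + ·) '' U) ∩ Γ = {y})
    {x y : G} (hx : x ∈ Γ) (hy : y ∈ Γ) (hxy : x - y ∈ U) : x = y := by
  have hx_mem : x ∈ ((y + ·) '' U) ∩ Γ := ⟨⟨x - y, hxy, add_sub_cancel y x⟩, hx⟩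
  rwa [hud y hy] at hx_mem

theorem tsum_mul_sub_eq_of_uniformlyDiscrete {R : Type*} [NonUnitalNonAssocSemiring R]
    [TopologicalSpace R] (hud : ∀ y ∈ Γ, ((y + ·) '' U) ∩ Γ = {y})
    {c F : G → R} (hc : ∀ y ∉ Γ, c y = 0) (hF : Function.support F ⊆ U)
    {x : G} (hx : x ∈ Γ) : ∑' y, c y * F (x - y) = c x * F 0 := by
  rw [tsum_eq_single x fun y hyx => ?_, sub_self]
  by_contra hne
  have hy : y ∈ Γ := by_contra fun hy => hne (by rw [hc y hy, zero_mul])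
  have hxy : x - y ∈ U := hF fun h0 => hne (by rw [h0, mul_zero])
  exact hyx (eq_of_sub_mem_of_uniformlyDiscrete hud hx hy hxy).symm

end UniformlyDiscrete

theorem stmt_8_general {G : Type*} [TopologicalSpace G] [AddCommGroup G]
    [MeasurableSpace G]
    (haar : Measure G)
    (U : Set G)
    (Γ Λ : Set G) (hΛΓ : Λ ⊆ Γ)
    (hud : ∀ x ∈ Γ, ((x + ·) '' U) ∩ Γ = {x})
    (w γw : G → ℂ)
    (hw0 : ∀ x ∉ Γ, w x = 0) (hw1 : ∀ x ∈ Λ, w x = 1)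
    (hγ0 : ∀ x ∉ Λ, γw x = 0)
    (f : G → ℂ)
    (hsupp : tsupport (convC haar f (tildeC f)) ⊆ U) :
    ∀ x : G, (∑' y : G, γw y * convC haar f (tildeC f) (x - y)) * w x
      = convC haar f (tildeC f) 0 * γw x := by
  intro x
  by_cases hxΓ : x ∈ Γ
  · have hγΓ : ∀ y ∉ Γ, γw y = 0 := fun y hy => hγ0 y (fun hyΛ => hy (hΛΓ hyΛ))
    rw [tsum_mul_sub_eq_of_uniformlyDiscrete hud hγΓ ((subset_tsupport _).trans hsupp) hxΓ]
    by_cases hxΛ : x ∈ Λ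
    · rw [hw1 x hxΛ, mul_one, mul_comm]
    · rw [hγ0 x hxΛ, zero_mul, zero_mul, mul_zero]
  · rw [hw0 x hxΓ, mul_zero, hγ0 x (fun hxΛ => hxΓ (hΛΓ hxΛ)), mul_zero]

/-- Let `ω` be a pure point measure (encoded by its atom weights `w`) whose
support `Γ` is `U`-uniformly discrete (`U` an open neighbourhood of `0`) with
`ω({x}) = 1` for all `x` in `Λ ⊆ Γ`.  Let `γ` be a pure point measure (atom weights
`γw`) supported inside `Λ`, and `f ∈ C_c(G)` with `supp(f * f̃) ⊆ U`.  Then the measure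
`(γ * f * f̃)·ω` equals `(f*f̃)(0) · γ` atomwise:
`((γ * (f*f̃))·ω)({x}) = (f*f̃)(0) · γ({x})` for every `x`, where
`(γ * (f*f̃))(x) = Σ_{y} γ({y}) (f*f̃)(x − y)`. -/
theorem stmt_8 {G : Type*} [TopologicalSpace G] [AddCommGroup G] [IsTopologicalAddGroup G]
    [LocallyCompactSpace G] [T2Space G] [MeasurableSpace G] [BorelSpace G]
    (haar : Measure G) [haar.IsAddHaarMeasure]
    (U : Set G) (hU : IsOpen U) (hU0 : (0 : G) ∈ U)
    (Γ Λ : Set G) (hΛΓ : Λ ⊆ Γ)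
    (hud : ∀ x ∈ Γ, ((x + ·) '' U) ∩ Γ = {x})
    (w γw : G → ℂ)
    (hw0 : ∀ x ∉ Γ, w x = 0) (hw1 : ∀ x ∈ Λ, w x = 1)
    (hγ0 : ∀ x ∉ Λ, γw x = 0)
    (f : G → ℂ) (hf : Continuous f) (hfc : HasCompactSupport f)
    (hsupp : tsupport (convC haar f (tildeC f)) ⊆ U) :
    ∀ x : G, (∑' y : G, γw y * convC haar f (tildeC f) (x - y)) * w x
      = convC haar f (tildeC f) 0 * γw x :=
  stmt_8_general haar U Γ Λ hΛΓ hud w γw hw0 hw1 hγ0 f hsupp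
end

section
/- Let (G, ℝ^d × H₁, 𝓛) be a cut and project scheme, K ⊆ G compact, and W ⊆ H₁ compact. Then there exists a constant C = C(K, W) such that for all Schwartz functions φ on ℝ^d and all ψ ∈ C_c(H₁) with supp(ψ) ⊆ W, the weighted Dirac comb ω_{φ⊗ψ} = Σ_{(x, x*) ∈ 𝓛} φ(π₁(x*)) ψ(π₂(x*)) δ_x is a translation bounded measure and ‖ω_{φ⊗ψ}‖_K ≤ C · ‖ψ‖_∞ · ‖(1 + |s|^{2d}) φ(s)‖_∞. -/
/-!
The points of a discrete subgroup `𝓛` in a translate `z + Q` of a compact set differ from any one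
of them by elements of the finite set `𝓛 ∩ (Q - Q)`, so their number is bounded independently
of `z`. Cutting `ℝ^d` into the unit cubes `m + [0,1)^d`, `m ∈ ℤ^d`, the lattice points
`(x, x*)` with `x ∈ t + K`, `π₁ x* ∈ m + [0,1)^d` and `π₂ x* ∈ W` are thus at most `N(K, W)`
in number, and each carries weight at most
`6^d ‖ψ‖_∞ ‖(1 + |s|^{2d}) φ(s)‖_∞ ∏ᵢ (1 + mᵢ²)⁻¹`, which is summable over `ℤ^d`.
-/

open MeasureTheory
open scoped ENNReal Pointwise

theorem AddSubgroup.exists_encard_le_of_isCompact {P : Type*} [TopologicalSpace P]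
    [AddCommGroup P] [IsTopologicalAddGroup P] [T2Space P] (L : AddSubgroup P)
    [DiscreteTopology L] {Q : Set P} (hQ : IsCompact Q) :
    ∃ N : ℕ, ∀ z : P, {ℓ : L | (ℓ : P) ∈ (z + ·) '' Q}.encard ≤ N := by
  have hfin : {ℓ : L | (ℓ : P) ∈ Q + -Q}.Finite := by
    simpa using (L.tendsto_coe_cofinite_of_discrete
      (isDiscrete_iff_discreteTopology.mpr ‹_›)).eventually (hQ.add hQ.neg).compl_mem_cocompact
  refine ⟨hfin.toFinset.card, fun z => ?_⟩
  rcases Set.eq_empty_or_nonempty {ℓ : L | (ℓ : P) ∈ (z + ·) '' Q} with h | ⟨ℓ₀, q₀, hq₀, hℓ₀⟩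
  · simp only [h, Set.encard_empty, zero_le]
  rw [← hfin.encard_eq_coe_toFinset_card]
  refine Set.encard_le_encard_of_injOn (f := (· - ℓ₀)) ?_ sub_left_injective.injOn
  rintro ℓ ⟨q, hq, hℓ⟩
  refine ⟨q, hq, -q₀, by simpa using hq₀, ?_⟩
  simp only [← hℓ, ← hℓ₀, AddSubgroupClass.coe_sub]
  abel

theorem ENNReal.tsum_le_mul_tsum_of_encard_fiber_le {ι κ : Type*} {f : ι → ℝ≥0∞}
    {g : κ → ℝ≥0∞} (cell : ι → κ) {N : ℕ} (hfg : ∀ i, f i ≤ g (cell i))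
    (hN : ∀ k, {i | f i ≠ 0 ∧ cell i = k}.encard ≤ N) : ∑' i, f i ≤ N * ∑' k, g k := by
  have hf : ∀ i, f i ≤ ∑' k, {j | f j ≠ 0 ∧ cell j = k}.indicator (fun _ => g k) i := by
    intro i
    by_cases hi : f i = 0
    · simp [hi]
    refine (hfg i).trans (le_of_eq_of_le ?_ (ENNReal.le_tsum (cell i)))
    rw [Set.indicator_of_mem (show i ∈ {j | f j ≠ 0 ∧ cell j = cell i} from ⟨hi, rfl⟩)]
  calc ∑' i, f i ≤ ∑' i, ∑' k, {j | f j ≠ 0 ∧ cell j = k}.indicator (fun _ => g k) i :=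
        ENNReal.tsum_le_tsum hf
    _ = ∑' k, {i | f i ≠ 0 ∧ cell i = k}.encard * g k := by
        rw [ENNReal.tsum_comm]
        simp_rw [← tsum_subtype, ENNReal.tsum_set_const]
    _ ≤ ∑' k, N * g k := by
        gcongr with k
        exact_mod_cast hN k
    _ = N * ∑' k, g k := ENNReal.tsum_mul_left

theorem ENNReal.tsum_fin_pi_prod {α : Type*} (w : α → ℝ≥0∞) :
    ∀ d : ℕ, ∑' m : Fin d → α, ∏ i, w (m i) = (∑' a, w a) ^ d
  | 0 => by simp
  | n + 1 => by
    rw [← (Fin.consEquiv fun _ => α).tsum_eq]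
    simp only [Fin.consEquiv_apply, Fin.prod_univ_succ, Fin.cons_zero, Fin.cons_succ]
    rw [ENNReal.tsum_prod (f := fun (a : α) (b : Fin n → α) => w a * ∏ i, w (b i)), pow_succ',
      ← ENNReal.tsum_fin_pi_prod w n, ← ENNReal.tsum_mul_right]
    simp only [ENNReal.tsum_mul_left]

theorem summable_inv_one_add_int_sq : Summable fun k : ℤ => (1 + (k : ℝ) ^ 2)⁻¹ := by
  refine Summable.of_norm_bounded_eventually (Real.summable_one_div_int_pow.mpr one_lt_two) ?_
  filter_upwards [(Set.finite_singleton (0 : ℤ)).compl_mem_cofinite] with k hk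
  have : (0 : ℝ) < (k : ℝ) ^ 2 := by
    have : (k : ℝ) ≠ 0 := by simpa using hk
    positivity
  rw [Real.norm_of_nonneg (by positivity), one_div]
  exact inv_anti₀ this (by linarith)

theorem one_add_floor_sq_le (r : ℝ) : 1 + (⌊r⌋ : ℝ) ^ 2 ≤ 3 * (1 + r ^ 2) := by
  have h₀ : 0 ≤ r - ⌊r⌋ := sub_nonneg.2 (Int.floor_le r)
  have h₁ : 0 ≤ 1 - (r - ⌊r⌋) := by linarith [Int.sub_one_lt_floor r]
  nlinarith [sq_nonneg (r + (r - ⌊r⌋)), mul_nonneg h₀ h₁]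

theorem prod_one_add_floor_sq_le {d : ℕ} (x : Fin d → ℝ) :
    ∏ i, (1 + (⌊x i⌋ : ℝ) ^ 2) ≤ 6 ^ d * (1 + ‖x‖ ^ (2 * d)) := by
  have hsq : ∀ i, x i ^ 2 ≤ ‖x‖ ^ 2 := fun i => by
    simpa only [Real.norm_eq_abs, sq_abs] using
      pow_le_pow_left₀ (norm_nonneg _) (norm_le_pi_norm x i) 2
  calc ∏ i, (1 + (⌊x i⌋ : ℝ) ^ 2) ≤ ∏ _i : Fin d, 3 * (1 + ‖x‖ ^ 2) :=
        Finset.prod_le_prod (fun i _ => by positivity)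
          fun i _ => (one_add_floor_sq_le (x i)).trans (by linarith [hsq i])
    _ = 3 ^ d * (1 + ‖x‖ ^ 2) ^ d := by simp [mul_pow]
    _ ≤ 3 ^ d * (2 ^ d * (1 + ‖x‖ ^ (2 * d))) := by
        gcongr
        calc (1 + ‖x‖ ^ 2) ^ d ≤ 2 ^ (d - 1) * (1 ^ d + (‖x‖ ^ 2) ^ d) :=
              add_pow_le zero_le_one (by positivity) d
          _ ≤ 2 ^ d * (1 + ‖x‖ ^ (2 * d)) := by
              rw [one_pow, ← pow_mul, mul_comm 2 d]
              gcongr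
              · norm_num
              · omega
    _ = 6 ^ d * (1 + ‖x‖ ^ (2 * d)) := by rw [← mul_assoc, ← mul_pow]; norm_num

theorem inv_one_add_norm_pow_le_prod_floor {d : ℕ} (x : Fin d → ℝ) :
    (1 + ‖x‖ ^ (2 * d))⁻¹ ≤ 6 ^ d * ∏ i, (1 + (⌊x i⌋ : ℝ) ^ 2)⁻¹ := by
  rw [Finset.prod_inv_distrib, ← div_eq_mul_inv, le_div_iff₀ (by positivity),
    inv_mul_le_iff₀ (by positivity), mul_comm]
  exact prod_one_add_floor_sq_le x

theorem SchwartzMap.bddAbove_range_one_add_norm_pow_mul {E F : Type*} [NormedAddCommGroup E]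
    [NormedSpace ℝ E] [NormedAddCommGroup F] [NormedSpace ℝ F] (φ : SchwartzMap E F) (k : ℕ) :
    BddAbove (Set.range fun x => (1 + ‖x‖ ^ k) * ‖φ x‖) := by
  obtain ⟨C₀, -, hC₀⟩ := φ.decay 0 0
  obtain ⟨Cₖ, -, hCₖ⟩ := φ.decay k 0
  refine ⟨C₀ + Cₖ, Set.forall_mem_range.mpr fun x => ?_⟩
  have h₀ := hC₀ x
  have hₖ := hCₖ x
  simp only [norm_iteratedFDeriv_zero, pow_zero, one_mul] at h₀ hₖ
  linarith [add_mul 1 (‖x‖ ^ k) ‖φ x‖]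

theorem ENNReal.tsum_prod_ofReal_inv_one_add_int_sq (d : ℕ) :
    ∑' m : Fin d → ℤ, ∏ i, ENNReal.ofReal (1 + (m i : ℝ) ^ 2)⁻¹ =
      ENNReal.ofReal ((∑' k : ℤ, (1 + (k : ℝ) ^ 2)⁻¹) ^ d) := by
  rw [ENNReal.tsum_fin_pi_prod (fun k : ℤ => ENNReal.ofReal (1 + (k : ℝ) ^ 2)⁻¹),
    ← ENNReal.ofReal_tsum_of_nonneg (fun _ => by positivity) summable_inv_one_add_int_sq,
    ← ENNReal.ofReal_pow (tsum_nonneg fun _ => by positivity)]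

theorem SchwartzMap.abs_le_prod_inv_one_add_floor_sq {d : ℕ} (φ : SchwartzMap (Fin d → ℝ) ℝ)
    (x : Fin d → ℝ) :
    |φ x| ≤ 6 ^ d * (⨆ s, (1 + ‖s‖ ^ (2 * d)) * |φ s|) * ∏ i, (1 + (⌊x i⌋ : ℝ) ^ 2)⁻¹ := by
  have hφx : (1 + ‖x‖ ^ (2 * d)) * |φ x| ≤ ⨆ s, (1 + ‖s‖ ^ (2 * d)) * |φ s| :=
    le_ciSup (φ.bddAbove_range_one_add_norm_pow_mul (2 * d)) x
  calc |φ x| = (1 + ‖x‖ ^ (2 * d)) * |φ x| * (1 + ‖x‖ ^ (2 * d))⁻¹ := by field_simp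
    _ ≤ (⨆ s, (1 + ‖s‖ ^ (2 * d)) * |φ s|) * (6 ^ d * ∏ i, (1 + (⌊x i⌋ : ℝ) ^ 2)⁻¹) := by
        gcongr
        · exact (Real.iSup_nonneg fun s => by positivity)
        · exact inv_one_add_norm_pow_le_prod_floor x
    _ = _ := by ring

section Lattice

variable {G H : Type*} [TopologicalSpace G] [AddCommGroup G] [IsTopologicalAddGroup G]
  [T2Space G] [TopologicalSpace H] [AddCommGroup H] [IsTopologicalAddGroup H] [T2Space H]
  {d : ℕ} (L : AddSubgroup (G × (Fin d → ℝ) × H)) [DiscreteTopology L]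

local notation "P" => G × (Fin d → ℝ) × H

theorem AddSubgroup.exists_tsum_le_mul_tsum_floor {K₀ : Set G} (hK₀ : IsCompact K₀)
    {W : Set H} (hW : IsCompact W) :
    ∃ N : ℕ, ∀ (t : G) (f : L → ℝ≥0∞) (g : (Fin d → ℤ) → ℝ≥0∞),
      (∀ ℓ : L, f ℓ ≠ 0 → (ℓ : P).1 ∈ (t + ·) '' K₀ ∧ (ℓ : P).2.2 ∈ W) →
      (∀ ℓ : L, f ℓ ≤ g fun i => ⌊(ℓ : P).2.1 i⌋) → ∑' ℓ, f ℓ ≤ N * ∑' m, g m := by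
  obtain ⟨N, hN⟩ := L.exists_encard_le_of_isCompact
    (hK₀.prod ((isCompact_Icc (a := (0 : Fin d → ℝ)) (b := 1)).prod hW))
  refine ⟨N, fun t f g hsupp hfg => ENNReal.tsum_le_mul_tsum_of_encard_fiber_le _ hfg fun m => ?_⟩
  -- the fibre over `m` lies in the translate `(t, m, 0) + K₀ × [0,1]^d × W`
  refine le_trans (Set.encard_le_encard fun ℓ hℓ => ?_) (hN (t, fun i => (m i : ℝ), 0))
  obtain ⟨⟨k, hk, hkℓ⟩, hW⟩ := hsupp ℓ hℓ.1
  refine ⟨((ℓ : P).1 - t, (ℓ : P).2.1 - fun i => (m i : ℝ), (ℓ : P).2.2),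
    ⟨?_, ⟨?_, ?_⟩, hW⟩, ?_⟩
  · simpa [← hkℓ] using hk
  · intro i
    simp [← hℓ.2, Int.fract_nonneg]
  · intro i
    simp [← hℓ.2, (Int.fract_lt_one _).le]
  · ext <;> simp

theorem exists_weightedComb_apply_le [MeasurableSpace G] [BorelSpace G] {K₀ : Set G}
    (hK₀ : IsCompact K₀) {W : Set H} (hW : IsCompact W) :
    ∃ C : ℝ, 0 < C ∧ ∀ (φ : SchwartzMap (Fin d → ℝ) ℝ) (ψ : H → ℝ),
      Continuous ψ → tsupport ψ ⊆ W → ∀ t : G,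
        (Measure.sum fun ℓ : L =>
          ENNReal.ofReal |φ (ℓ : P).2.1 * ψ (ℓ : P).2.2| •
            Measure.dirac (ℓ : P).1) ((t + ·) '' K₀) ≤
        ENNReal.ofReal (C * (⨆ y, |ψ y|) * ⨆ s : Fin d → ℝ, (1 + ‖s‖ ^ (2 * d)) * |φ s|) := by
  obtain ⟨N, hN⟩ := L.exists_tsum_le_mul_tsum_floor hK₀ hW
  set S := ∑' k : ℤ, (1 + (k : ℝ) ^ 2)⁻¹
  have hS : 0 < S := summable_inv_one_add_int_sq.tsum_pos (fun _ => by positivity) 0 (by norm_num)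
  refine ⟨(N + 1) * 6 ^ d * S ^ d, by positivity, fun φ ψ hψ hψW t => ?_⟩
  set Mψ := ⨆ y, |ψ y|
  set Mφ := ⨆ s : Fin d → ℝ, (1 + ‖s‖ ^ (2 * d)) * |φ s|
  have hψ_le : ∀ y, |ψ y| ≤ Mψ := le_ciSup (hψ.norm.bddAbove_range_of_hasCompactSupport
    (show HasCompactSupport ψ from hW.of_isClosed_subset (isClosed_tsupport ψ) hψW).norm)
  have hMψ : 0 ≤ Mψ := (abs_nonneg _).trans (hψ_le 0)
  have hMφ : 0 ≤ Mφ := Real.iSup_nonneg fun x => by positivity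
  have hs : MeasurableSet ((t + ·) '' K₀) :=
    (hK₀.image (continuous_const_add t)).isClosed.measurableSet
  rw [Measure.sum_apply _ hs]
  simp only [Measure.smul_apply, smul_eq_mul, Measure.dirac_apply' _ hs]
  set A := 6 ^ d * Mφ * Mψ with hA
  calc _ ≤ N * ∑' m : Fin d → ℤ, ENNReal.ofReal A * ∏ i, ENNReal.ofReal (1 + (m i : ℝ) ^ 2)⁻¹ := by
        refine hN t _ _ (fun ℓ hℓ => ?support) (fun ℓ => ?weight)
        case support =>
          obtain ⟨hφψ, hind⟩ := mul_ne_zero_iff.mp hℓ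
          refine ⟨by_contra fun h => hind (Set.indicator_of_notMem h _), hψW ?_⟩
          exact subset_tsupport ψ fun h => hφψ (by simp [h])
        case weight =>
          have hind : ((t + ·) '' K₀).indicator (1 : G → ℝ≥0∞) (ℓ : P).1 ≤ 1 :=
            Set.indicator_le_self' (fun _ _ => zero_le) _
          refine (mul_le_of_le_one_right' hind).trans ?_
          rw [← ENNReal.ofReal_prod_of_nonneg fun i _ => by positivity,
            ← ENNReal.ofReal_mul (by positivity), abs_mul, hA]
          refine ENNReal.ofReal_le_ofReal ?_
          calc _ ≤ (6 ^ d * Mφ * ∏ i, (1 + (⌊(ℓ : P).2.1 i⌋ : ℝ) ^ 2)⁻¹) * Mψ :=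
                mul_le_mul (φ.abs_le_prod_inv_one_add_floor_sq _) (hψ_le _) (abs_nonneg _)
                  (by positivity)
            _ = _ := by ring
    _ = N * ENNReal.ofReal (A * S ^ d) := by
        rw [ENNReal.tsum_mul_left, ENNReal.tsum_prod_ofReal_inv_one_add_int_sq,
          ← ENNReal.ofReal_mul (by positivity)]
    _ ≤ ENNReal.ofReal ((N + 1) * (A * S ^ d)) := by
        rw [← ENNReal.ofReal_natCast, ← ENNReal.ofReal_mul (by positivity)]
        gcongr
        linarith
    _ = _ := by rw [hA]; congr 1; ring

end Lattice

theorem stmt_10_general {G H₁ : Type*}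
    [TopologicalSpace G] [AddCommGroup G] [IsTopologicalAddGroup G]
    [T2Space G] [MeasurableSpace G] [BorelSpace G]
    [TopologicalSpace H₁] [AddCommGroup H₁] [IsTopologicalAddGroup H₁]
    [T2Space H₁]
    (d : ℕ)
    (L : AddSubgroup (G × (Fin d → ℝ) × H₁))
    (hLdisc : DiscreteTopology L)
    (K : Set G) (hK : IsCompact K) (W : Set H₁) (hW : IsCompact W) :
    ∃ C : ℝ, 0 < C ∧
      ∀ (φ : SchwartzMap (Fin d → ℝ) ℝ) (ψ : H₁ → ℝ),
        Continuous ψ → tsupport ψ ⊆ W →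
        (∀ K' : Set G, IsCompact K' →
          (⨆ t : G, (Measure.sum (fun ℓ : L =>
            (ENNReal.ofReal |φ ((ℓ : G × (Fin d → ℝ) × H₁).2.1)
              * ψ ((ℓ : G × (Fin d → ℝ) × H₁).2.2)|) •
            Measure.dirac ((ℓ : G × (Fin d → ℝ) × H₁).1))) ((t + ·) '' K')) < ⊤) ∧
        (⨆ t : G, (Measure.sum (fun ℓ : L =>
            (ENNReal.ofReal |φ ((ℓ : G × (Fin d → ℝ) × H₁).2.1)
              * ψ ((ℓ : G × (Fin d → ℝ) × H₁).2.2)|) •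
            Measure.dirac ((ℓ : G × (Fin d → ℝ) × H₁).1))) ((t + ·) '' K)) ≤
          ENNReal.ofReal (C * (⨆ y : H₁, |ψ y|)
            * (⨆ s : Fin d → ℝ, (1 + ‖s‖ ^ (2 * d)) * |φ s|)) := by
  obtain ⟨C, hC, hCK⟩ := exists_weightedComb_apply_le L hK hW
  refine ⟨C, hC, fun φ ψ hψ hψW => ⟨fun K' hK' => ?_, iSup_le (hCK φ ψ hψ hψW)⟩⟩
  obtain ⟨C', -, hC'K'⟩ := exists_weightedComb_apply_le L hK' hW
  exact (iSup_le (hC'K' φ ψ hψ hψW)).trans_lt ENNReal.ofReal_lt_top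

/-- Let `(G, ℝ^d × H₁, 𝓛)` be a cut and project scheme (`𝓛` a lattice in
`G × ℝ^d × H₁`, i.e. a discrete cocompact subgroup, projecting injectively to `G` and
densely to `ℝ^d × H₁`), `K ⊆ G` compact and `W ⊆ H₁` compact.  Then there is a constant
`C = C(K, W) > 0` such that for every Schwartz function `φ` on `ℝ^d` and every
`ψ ∈ C_c(H₁)` with `supp ψ ⊆ W`, the weighted Dirac comb
`ω_{φ⊗ψ} = Σ_{(x,x*)∈𝓛} φ(π₁ x*) ψ(π₂ x*) δ_x` (here represented through its total
variation `Σ |φ(π₁ x*) ψ(π₂ x*)| δ_x`) is translation bounded and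
`‖ω_{φ⊗ψ}‖_K ≤ C ‖ψ‖_∞ ‖(1+|s|^{2d}) φ(s)‖_∞`. -/
theorem stmt_10 {G H₁ : Type*}
    [TopologicalSpace G] [AddCommGroup G] [IsTopologicalAddGroup G]
    [LocallyCompactSpace G] [T2Space G] [MeasurableSpace G] [BorelSpace G]
    [TopologicalSpace H₁] [AddCommGroup H₁] [IsTopologicalAddGroup H₁]
    [LocallyCompactSpace H₁] [T2Space H₁]
    (d : ℕ)
    (L : AddSubgroup (G × (Fin d → ℝ) × H₁))
    (hLdisc : DiscreteTopology L)
    (hLcocpt : ∃ C : Set (G × (Fin d → ℝ) × H₁), IsCompact C ∧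
      ∀ z : G × (Fin d → ℝ) × H₁, ∃ ℓ ∈ L, z ∈ (ℓ + ·) '' C)
    (hLinj : ∀ ℓ₁ ℓ₂ : L, (ℓ₁ : G × (Fin d → ℝ) × H₁).1 = (ℓ₂ : G × (Fin d → ℝ) × H₁).1 →
      ℓ₁ = ℓ₂)
    (hLdense : DenseRange (fun ℓ : L => (ℓ : G × (Fin d → ℝ) × H₁).2))
    (K : Set G) (hK : IsCompact K) (W : Set H₁) (hW : IsCompact W) :
    ∃ C : ℝ, 0 < C ∧
      ∀ (φ : SchwartzMap (Fin d → ℝ) ℝ) (ψ : H₁ → ℝ),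
        Continuous ψ → tsupport ψ ⊆ W →
        (∀ K' : Set G, IsCompact K' →
          (⨆ t : G, (Measure.sum (fun ℓ : L =>
            (ENNReal.ofReal |φ ((ℓ : G × (Fin d → ℝ) × H₁).2.1)
              * ψ ((ℓ : G × (Fin d → ℝ) × H₁).2.2)|) •
            Measure.dirac ((ℓ : G × (Fin d → ℝ) × H₁).1))) ((t + ·) '' K')) < ⊤) ∧
        (⨆ t : G, (Measure.sum (fun ℓ : L =>
            (ENNReal.ofReal |φ ((ℓ : G × (Fin d → ℝ) × H₁).2.1)
              * ψ ((ℓ : G × (Fin d → ℝ) × H₁).2.2)|) •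
            Measure.dirac ((ℓ : G × (Fin d → ℝ) × H₁).1))) ((t + ·) '' K)) ≤
          ENNReal.ofReal (C * (⨆ y : H₁, |ψ y|)
            * (⨆ s : Fin d → ℝ, (1 + ‖s‖ ^ (2 * d)) * |φ s|)) :=
  stmt_10_general d L hLdisc K hK W hW
end

section
/- Let G be a σ-compact locally compact abelian group, ω a translation bounded pure point measure on G, and ν a finite measure on G. Then the convolution ω * ν exists as a translation bounded measure, and its Lebesgue decomposition satisfies (ω*ν)_pp = ω*ν_pp, (ω*ν)_ac = ω*ν_ac, (ω*ν)_sc = ω*ν_sc, where ν = ν_pp + ν_ac + ν_sc is the Lebesgue decomposition of ν with respect to Haar measure. -/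
/-!
Everything reduces to the two Fubini formulas
`(ω * ν)(S) = ∫ ν(S - t) dω(t) = ∫ ω(S - s) dν(s)`.
Translation boundedness is inherited through the second one since `ν` is finite. The first one
shows that `(ω * ν)(S) = 0` as soon as `ν(S - t) = 0` for `ω`-almost every `t`; as `ω` lives on
a countable set `D`, this gives the pure point part (concentrated on `D + E`), the absolutely
continuous part (Haar null sets are translation invariant), the continuous part (translates of
points are points) and the singular part (concentrated on `⋂_{d ∈ D} (d + N)` for a Haar-null set
`N` carrying `ν_sc`).
-/

open MeasureTheory

/-- Convolution of measures: `(ω * ν)(A) = ∫∫ 1_A(s+t) dν(s) dω(t)`. -/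
noncomputable def mconv {G : Type*} [AddCommGroup G] [MeasurableSpace G]
    (ω ν : Measure G) : Measure G :=
  (ω.prod ν).map (fun p : G × G => p.1 + p.2)

open Set Pointwise

section Measurable

variable {G : Type*} [AddCommGroup G] [MeasurableSpace G] [MeasurableAdd₂ G]
  {ω ν : Measure G} {S : Set G}

theorem mconv_apply (ω ν : Measure G) [SFinite ν] (hS : MeasurableSet S) :
    mconv ω ν S = ∫⁻ t, ν ((t + ·) ⁻¹' S) ∂ω := by
  rw [mconv, Measure.map_apply measurable_add hS, Measure.prod_apply (measurable_add hS)]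
  rfl

theorem mconv_apply' (ω ν : Measure G) [SFinite ω] [SFinite ν] (hS : MeasurableSet S) :
    mconv ω ν S = ∫⁻ s, ω ((· + s) ⁻¹' S) ∂ν := by
  rw [mconv, Measure.map_apply measurable_add hS, Measure.prod_apply_symm (measurable_add hS)]
  rfl

theorem mconv_add_right (ω ν₁ ν₂ : Measure G) [SFinite ω] [SFinite ν₁] [SFinite ν₂] :
    mconv ω (ν₁ + ν₂) = mconv ω ν₁ + mconv ω ν₂ := by
  rw [mconv, mconv, mconv, Measure.prod_add, Measure.map_add _ _ measurable_add]

theorem mconv_apply_eq_zero_of_ae [SFinite ν] (hS : MeasurableSet S)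
    (h : ∀ᵐ t ∂ω, ν ((t + ·) ⁻¹' S) = 0) : mconv ω ν S = 0 := by
  rw [mconv_apply ω ν hS, lintegral_congr_ae h, lintegral_zero]

theorem mconv_compl_add_eq_zero [SFinite ν] {D E : Set G} (hD : ω Dᶜ = 0) (hE : ν Eᶜ = 0)
    (hDE : MeasurableSet (D + E)) : mconv ω ν (D + E)ᶜ = 0 := by
  refine mconv_apply_eq_zero_of_ae hDE.compl (measure_eq_zero_iff_ae_notMem.mp hD |>.mono ?_)
  intro t ht
  refine measure_mono_null (fun s hs ↦ ?_) hE
  exact fun hsE ↦ hs (add_mem_add (not_not.mp ht) hsE)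

instance [MeasurableSingletonClass G] [SFinite ν] [NullSingletonClass ν] :
    NullSingletonClass (mconv ω ν) where
  measure_singleton x :=
    mconv_apply_eq_zero_of_ae (measurableSet_singleton x) <| ae_of_all _ fun t ↦ by
      rw [preimage_add_left_singleton]
      exact measure_singleton _

variable {μ : Measure G} [μ.IsAddLeftInvariant]

theorem mconv_absolutelyContinuous [SFinite ν] (h : ν ≪ μ) : mconv ω ν ≪ μ :=
  Measure.AbsolutelyContinuous.mk fun S hS hS0 ↦
    mconv_apply_eq_zero_of_ae hS <| ae_of_all _ fun t ↦ h <| by rwa [measure_preimage_add]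

theorem mconv_mutuallySingular [SFinite ν] {D : Set G} (hD : D.Countable) (hωD : ω Dᶜ = 0)
    (h : ν ⟂ₘ μ) : mconv ω ν ⟂ₘ μ := by
  obtain ⟨N, hN, hνN, hμN⟩ := h
  -- `ω * ν` lives on the points lying in every translate `d + N`, `d ∈ D`
  have hT : MeasurableSet (⋂ d ∈ D, (-d + ·) ⁻¹' N) :=
    .biInter hD fun d _ ↦ hN.preimage (measurable_const_add _)
  refine ⟨_, hT, mconv_apply_eq_zero_of_ae hT ?_, ?_⟩
  · refine (measure_eq_zero_iff_ae_notMem.mp hωD).mono fun t ht ↦ measure_mono_null ?_ hνN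
    intro s hs
    simpa using mem_iInter₂.mp hs t (not_not.mp ht)
  · rw [compl_iInter₂, measure_biUnion_null_iff hD]
    intro d _
    rwa [← preimage_compl, measure_preimage_add]

end Measurable

section Topological

variable {G : Type*} [TopologicalSpace G] [AddCommGroup G] [MeasurableSpace G]

def IsTranslationBounded (μ : Measure G) : Prop :=
  ∀ C : Set G, IsCompact C → (⨆ t : G, μ ((t + ·) '' C)) < ⊤

theorem IsTranslationBounded.isFiniteMeasureOnCompacts {μ : Measure G}
    (hμ : IsTranslationBounded μ) : IsFiniteMeasureOnCompacts μ where
  lt_top_of_isCompact C hC := (le_iSup_of_le 0 (by simp)).trans_lt (hμ C hC)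

theorem isTranslationBounded_mconv [IsTopologicalAddGroup G] [T2Space G]
    [SecondCountableTopology G] [BorelSpace G] {ω : Measure G} [SFinite ω]
    (hω : IsTranslationBounded ω) (ν : Measure G) [IsFiniteMeasure ν] :
    IsTranslationBounded (mconv ω ν) := by
  intro C hC
  refine (iSup_le fun t ↦ ?_).trans_lt (ENNReal.mul_lt_top (hω C hC) (measure_lt_top ν univ))
  have hshift (s : G) : (· + s) ⁻¹' ((t + ·) '' C) = ((t - s) + ·) '' C := by
    ext x
    simp only [image_add_left, mem_preimage]
    abel_nf
  calc mconv ω ν ((t + ·) '' C)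
      = ∫⁻ s, ω (((t - s) + ·) '' C) ∂ν := by
        simp_rw [mconv_apply' ω ν (hC.image (continuous_const_add t)).measurableSet, hshift]
    _ ≤ ∫⁻ _, ⨆ u : G, ω ((u + ·) '' C) ∂ν :=
        lintegral_mono fun s ↦ le_iSup (fun u ↦ ω ((u + ·) '' C)) (t - s)
    _ = (⨆ u : G, ω ((u + ·) '' C)) * ν univ := lintegral_const _

end Topological

theorem stmt_14_general {G : Type*} [TopologicalSpace G] [AddCommGroup G] [IsTopologicalAddGroup G]
    [T2Space G] [SigmaCompactSpace G] [SecondCountableTopology G]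
    [MeasurableSpace G] [BorelSpace G]
    (haar : Measure G) [haar.IsAddHaarMeasure]
    (ω ν νpp νac νsc : Measure G)
    [IsFiniteMeasure ν] [IsFiniteMeasure νpp] [IsFiniteMeasure νac] [IsFiniteMeasure νsc]
    (hωpp : ∃ D : Set G, D.Countable ∧ ω Dᶜ = 0)
    (hωtb : ∀ C : Set G, IsCompact C → (⨆ t : G, ω ((t + ·) '' C)) < ⊤)
    (hdec : ν = νpp + νac + νsc)
    (hpp : ∃ D : Set G, D.Countable ∧ νpp Dᶜ = 0)
    (hac : νac ≪ haar)
    (hsc : νsc ⟂ₘ haar) (hsc' : ∀ x : G, νsc {x} = 0) :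
    (∀ C : Set G, IsCompact C → (⨆ t : G, mconv ω ν ((t + ·) '' C)) < ⊤) ∧
    mconv ω ν = mconv ω νpp + mconv ω νac + mconv ω νsc ∧
    (∃ D : Set G, D.Countable ∧ mconv ω νpp Dᶜ = 0) ∧
    mconv ω νac ≪ haar ∧
    (∀ x : G, mconv ω νsc {x} = 0) ∧
    mconv ω νsc ⟂ₘ haar := by
  have hωtb : IsTranslationBounded ω := hωtb
  have := hωtb.isFiniteMeasureOnCompacts
  have : NullSingletonClass νsc := ⟨hsc'⟩
  obtain ⟨D, hD, hωD⟩ := hωpp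
  obtain ⟨E, hE, hνE⟩ := hpp
  have hDE : (D + E).Countable := by rw [← image2_add]; exact hD.image2 hE _
  refine ⟨isTranslationBounded_mconv hωtb ν, ?_,
    ⟨D + E, hDE, mconv_compl_add_eq_zero hωD hνE hDE.measurableSet⟩,
    mconv_absolutelyContinuous hac, measure_singleton, mconv_mutuallySingular hD hωD hsc⟩
  rw [hdec, mconv_add_right, mconv_add_right]

/-- Let `G` be a σ-compact locally compact abelian group, `ω` a translation
bounded pure point measure and `ν` a finite measure with Lebesgue decomposition
`ν = νpp + νac + νsc` w.r.t. Haar measure.  Then `ω * ν` is a translation bounded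
measure and its Lebesgue decomposition is `(ω*ν)_pp = ω*νpp`, `(ω*ν)_ac = ω*νac`,
`(ω*ν)_sc = ω*νsc`: that is, `ω*ν = ω*νpp + ω*νac + ω*νsc` where `ω*νpp` is pure
point, `ω*νac ≪ haar`, and `ω*νsc` is atomless and singular to Haar. -/
theorem stmt_14 {G : Type*} [TopologicalSpace G] [AddCommGroup G] [IsTopologicalAddGroup G]
    [LocallyCompactSpace G] [T2Space G] [SigmaCompactSpace G] [SecondCountableTopology G]
    [MeasurableSpace G] [BorelSpace G]
    (haar : Measure G) [haar.IsAddHaarMeasure]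
    (ω ν νpp νac νsc : Measure G)
    [IsFiniteMeasure ν] [IsFiniteMeasure νpp] [IsFiniteMeasure νac] [IsFiniteMeasure νsc]
    (hωpp : ∃ D : Set G, D.Countable ∧ ω Dᶜ = 0)
    (hωtb : ∀ C : Set G, IsCompact C → (⨆ t : G, ω ((t + ·) '' C)) < ⊤)
    (hdec : ν = νpp + νac + νsc)
    (hpp : ∃ D : Set G, D.Countable ∧ νpp Dᶜ = 0)
    (hac : νac ≪ haar)
    (hsc : νsc ⟂ₘ haar) (hsc' : ∀ x : G, νsc {x} = 0) :
    (∀ C : Set G, IsCompact C → (⨆ t : G, mconv ω ν ((t + ·) '' C)) < ⊤) ∧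
    mconv ω ν = mconv ω νpp + mconv ω νac + mconv ω νsc ∧
    (∃ D : Set G, D.Countable ∧ mconv ω νpp Dᶜ = 0) ∧
    mconv ω νac ≪ haar ∧
    (∀ x : G, mconv ω νsc {x} = 0) ∧
    mconv ω νsc ⟂ₘ haar :=
  stmt_14_general haar ω ν νpp νac νsc hωpp hωtb hdec hpp hac hsc hsc'
end

section
/- Let H be a locally compact abelian group and W ⊆ H a compact set. Then there exist four functions of the form uⱼ * ũⱼ with uⱼ ∈ C_c(H) (j = 1,…,4) such that (1/4)[ u₁*ũ₁ − u₂*ũ₂ + i·u₃*ũ₃ − i·u₄*ũ₄ ](x) = 1 for all x ∈ W, and all four functions have common compact support. -/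
/-!
Choose a continuous compactly supported `h` with `∫ h = 1` and a continuous compactly supported
`g` equal to `1` on `W + supp h`. Then for `x ∈ W` the translate `s ↦ g (s + x)` is `1` on the
support of `h`, so `(g * h̃)(x) = ∫ g (s + x) · conj (h s) ds = conj (∫ h) = 1`. The polarisation
identity writes the sesquilinear expression `g * h̃` as the combination
`¼ [u₁ * ũ₁ − u₂ * ũ₂ + i u₃ * ũ₃ − i u₄ * ũ₄]` with `uⱼ = g + εⱼ h`, `εⱼ ∈ {1, −1, i, −i}`,
and every `uⱼ * ũⱼ` is supported in `K − K` for `K = supp g ∪ supp h`.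
-/

open MeasureTheory Pointwise

open Function Set Complex ComplexConjugate

lemma polarization_mul_conj (a b c d : ℂ) :
    (1/4 : ℂ) * ((a + b) * conj (c + d) - (a - b) * conj (c - d)
      + I * ((a + I * b) * conj (c + I * d)) - I * ((a - I * b) * conj (c - I * d)))
      = a * conj d := by
  simp only [map_add, map_sub, map_mul, conj_I]
  ring_nf
  rw [I_sq]
  ring

lemma support_tildeC {G : Type*} [AddCommGroup G] (f : G → ℂ) :
    support (tildeC f) = -support f := by
  ext x
  simp [tildeC]

section Convolution

variable {H : Type*} [AddCommGroup H] [MeasurableSpace H] (μ : Measure H)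

lemma support_convC_subset (f g : H → ℂ) : support (convC μ f g) ⊆ support f + support g :=
  support_convolution_subset (ContinuousLinearMap.mul ℂ ℂ)

variable [TopologicalSpace H]

lemma tsupport_convC_tildeC_subset [IsTopologicalAddGroup H] [T2Space H] {K : Set H}
    (hK : IsCompact K) {f : H → ℂ} (hf : support f ⊆ K) :
    tsupport (convC μ f (tildeC f)) ⊆ K + -K :=
  closure_minimal
    ((support_convC_subset μ f _).trans
      (add_subset_add hf (by rw [support_tildeC]; exact neg_subset_neg.2 hf)))
    (hK.add hK.neg).isClosed

lemma convC_tildeC_eq_conj_integral [MeasurableAdd H] [μ.IsAddRightInvariant] {g h : H → ℂ}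
    {W : Set H} (hg : EqOn g 1 (W + tsupport h)) {x : H} (hx : x ∈ W) :
    convC μ g (tildeC h) x = conj (∫ t, h t ∂μ) := by
  have hplateau : ∀ s, g (s + x) * conj (h s) = conj (h s) := by
    intro s
    by_cases hs : s ∈ tsupport h
    · rw [hg ⟨x, hx, s, hs, add_comm x s⟩, Pi.one_apply, one_mul]
    · simp [image_eq_zero_of_notMem_tsupport hs]
  calc convC μ g (tildeC h) x = ∫ s, g (s + x) * conj (h s) ∂μ := by
        simpa [convC, tildeC] using
          (integral_add_right_eq_self (μ := μ) (fun t => g t * conj (h (t - x))) x).symm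
    _ = conj (∫ t, h t ∂μ) := by simp_rw [hplateau, integral_conj]

variable [IsTopologicalAddGroup H] [OpensMeasurableSpace H] [IsFiniteMeasureOnCompacts μ]

lemma integrable_mul_tildeC_sub {f g : H → ℂ} (hf : Continuous f) (hfs : HasCompactSupport f)
    (hg : Continuous g) (x : H) : Integrable (fun t => f t * tildeC g (x - t)) μ :=
  (hf.mul (by unfold tildeC; fun_prop)).integrable_of_hasCompactSupport hfs.mul_right

lemma convC_tildeC_polarization {f g : H → ℂ} (hf : Continuous f) (hfs : HasCompactSupport f)
    (hg : Continuous g) (hgs : HasCompactSupport g) (x : H) :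
    (1/4 : ℂ) * (convC μ (f + g) (tildeC (f + g)) x - convC μ (f - g) (tildeC (f - g)) x
      + I * convC μ (f + I • g) (tildeC (f + I • g)) x
      - I * convC μ (f - I • g) (tildeC (f - I • g)) x) = convC μ f (tildeC g) x := by
  have hint {u : H → ℂ} (hu : Continuous u) (hus : HasCompactSupport u) :=
    integrable_mul_tildeC_sub μ hu hus hu x
  have h₁ := hint (hf.add hg) (hfs.add hgs)
  have h₂ := hint (hf.sub hg) (hfs.sub hgs)
  have h₃ := hint (hf.add (hg.const_smul I)) (hfs.add hgs.smul_left)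
  have h₄ := hint (hf.sub (hg.const_smul I)) (hfs.sub hgs.smul_left)
  calc _ = (1/4 : ℂ) * ∫ t, ((f + g) t * tildeC (f + g) (x - t)
          - (f - g) t * tildeC (f - g) (x - t)
          + I * ((f + I • g) t * tildeC (f + I • g) (x - t))
          - I * ((f - I • g) t * tildeC (f - I • g) (x - t))) ∂μ := by
        rw [integral_sub, integral_add, integral_sub h₁ h₂, integral_const_mul,
          integral_const_mul]
        exacts [rfl, h₁.sub h₂, h₃.const_mul I, (h₁.sub h₂).add (h₃.const_mul I), h₄.const_mul I]
    _ = convC μ f (tildeC g) x := by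
        rw [← integral_const_mul]
        congr 1
        ext t
        simpa [tildeC] using polarization_mul_conj (f t) (g t) (f (t - x)) (g (t - x))

end Convolution

lemma exists_continuous_hasCompactSupport_integral_eq_one {X : Type*} [TopologicalSpace X]
    [LocallyCompactSpace X] [RegularSpace X] [Nonempty X] [MeasurableSpace X]
    [OpensMeasurableSpace X] (μ : Measure X) [μ.IsOpenPosMeasure] [IsFiniteMeasureOnCompacts μ] :
    ∃ h : X → ℂ, Continuous h ∧ HasCompactSupport h ∧ ∫ t, h t ∂μ = 1 := by
  obtain ⟨x₀⟩ := ‹Nonempty X›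
  obtain ⟨f, hf₀, -, hfs, hf01⟩ := exists_continuous_one_zero_of_isCompact
    (isCompact_singleton (x := x₀)) isClosed_empty (disjoint_empty _)
  have hpos : 0 < ∫ t, f t ∂μ := f.continuous.integral_pos_of_hasCompactSupport_nonneg_nonzero
    hfs (fun t => (hf01 t).1) (x := x₀) (by simp [hf₀ rfl])
  refine ⟨fun t => ((∫ t, f t ∂μ)⁻¹ * f t : ℝ), by fun_prop,
    hfs.mul_left.comp_left ofReal_zero, ?_⟩
  rw [integral_complex_ofReal, integral_const_mul, inv_mul_cancel₀ hpos.ne', ofReal_one]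

lemma exists_continuous_hasCompactSupport_eqOn_one {X : Type*} [TopologicalSpace X]
    [LocallyCompactSpace X] [RegularSpace X] {K : Set X} (hK : IsCompact K) :
    ∃ g : X → ℂ, Continuous g ∧ HasCompactSupport g ∧ EqOn g 1 K := by
  obtain ⟨f, hf₁, -, hfs, -⟩ :=
    exists_continuous_one_zero_of_isCompact hK isClosed_empty (disjoint_empty _)
  refine ⟨fun t => (f t : ℂ), by fun_prop, hfs.comp_left ofReal_zero, fun t ht => ?_⟩
  simp [hf₁ ht]

lemma exists_convC_tildeC_eqOn_one {H : Type*} [TopologicalSpace H] [AddCommGroup H]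
    [IsTopologicalAddGroup H] [LocallyCompactSpace H] [MeasurableSpace H] [BorelSpace H]
    (μ : Measure H) [μ.IsAddHaarMeasure] {W : Set H} (hW : IsCompact W) :
    ∃ g h : H → ℂ, Continuous g ∧ HasCompactSupport g ∧ Continuous h ∧ HasCompactSupport h ∧
      EqOn (convC μ g (tildeC h)) 1 W := by
  obtain ⟨h, hh, hhs, hint⟩ := exists_continuous_hasCompactSupport_integral_eq_one μ
  obtain ⟨g, hg, hgs, hg₁⟩ := exists_continuous_hasCompactSupport_eqOn_one (hW.add hhs)
  refine ⟨g, h, hg, hgs, hh, hhs, fun x hx => ?_⟩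
  rw [convC_tildeC_eq_conj_integral μ hg₁ hx, hint, map_one, Pi.one_apply]

/-- Let `H` be a locally compact abelian group with Haar measure and
`W ⊆ H` compact.  Then there exist four functions of the form `uⱼ * ũⱼ` with
`uⱼ ∈ C_c(H)` such that
`(1/4)[u₁*ũ₁ − u₂*ũ₂ + i·u₃*ũ₃ − i·u₄*ũ₄](x) = 1` for all `x ∈ W`, and all four
functions `uⱼ * ũⱼ` are supported inside a common compact set. -/
theorem stmt_15 {H : Type*} [TopologicalSpace H] [AddCommGroup H] [IsTopologicalAddGroup H]
    [LocallyCompactSpace H] [T2Space H] [MeasurableSpace H] [BorelSpace H]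
    (haar : Measure H) [haar.IsAddHaarMeasure]
    (W : Set H) (hW : IsCompact W) :
    ∃ (u : Fin 4 → H → ℂ) (S : Set H), IsCompact S ∧
      (∀ j, Continuous (u j) ∧ HasCompactSupport (u j)) ∧
      (∀ j, tsupport (convC haar (u j) (tildeC (u j))) ⊆ S) ∧
      ∀ x ∈ W,
        (1/4 : ℂ) * (convC haar (u 0) (tildeC (u 0)) x
          - convC haar (u 1) (tildeC (u 1)) x
          + Complex.I * convC haar (u 2) (tildeC (u 2)) x
          - Complex.I * convC haar (u 3) (tildeC (u 3)) x) = 1 := by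
  obtain ⟨g, h, hg, hgs, hh, hhs, hgh⟩ := exists_convC_tildeC_eqOn_one haar hW
  set K := tsupport g ∪ tsupport h
  have hK : IsCompact K := hgs.isCompact.union hhs.isCompact
  let u : Fin 4 → H → ℂ := ![g + h, g - h, g + I • h, g - I • h]
  have hu : ∀ j, ∃ c : ℂ, u j = g + c • h := by
    intro j
    fin_cases j
    exacts [⟨1, by simp [u]⟩, ⟨-1, by simp [u, sub_eq_add_neg]⟩, ⟨I, rfl⟩,
      ⟨-I, by simp [u, sub_eq_add_neg]⟩]
  have hu_supp : ∀ j, support (u j) ⊆ K := by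
    intro j
    obtain ⟨c, hc⟩ := hu j
    rw [hc]
    exact (support_add _ _).trans <| union_subset_union (subset_tsupport g)
      ((support_const_smul_subset c h).trans (subset_tsupport h))
  refine ⟨u, K + -K, hK.add hK.neg, fun j => ?_,
    fun j => tsupport_convC_tildeC_subset haar hK (hu_supp j), fun x hx => ?_⟩
  · obtain ⟨c, hc⟩ := hu j
    rw [hc]
    exact ⟨by fun_prop, hgs.add hhs.smul_left⟩
  · simpa [u] using (convC_tildeC_polarization haar hg hgs hh hhs x).trans (hgh hx)
end
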